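/- For any d×d unitary matrix U with d odd, tr(U U*) ≥ −d + 2, where U* is the entrywise complex conjugate; consequently the FEF of the Werner state for d odd and −1 ≤ f < 1/d equals (d² − d²f + df + d − 2)/(d²(d²−1)). -/

import Mathlib

open Matrix Complex BigOperators Finset

noncomputable section

/-- The maximally entangled state `|ψ⁺⟩ = (1/√d) ∑ₖ |kk⟩` on `ℂ^d ⊗ ℂ^d`. -/
def psiPlus (d : ℕ) : (Fin d × Fin d) → ℂ :=
  fun p => if p.1 = p.2 then ((1 / Real.sqrt d : ℝ) : ℂ) else 0

/-- `U ⊗ I` acting on `ℂ^d ⊗ ℂ^d`. -/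
def tensorI {d : ℕ} (U : Matrix (Fin d) (Fin d) ℂ) :
    Matrix (Fin d × Fin d) (Fin d × Fin d) ℂ :=
  fun p q => U p.1 q.1 * (if p.2 = q.2 then 1 else 0)

/-- The rank-one projector `|ψ⟩⟨ψ|`. -/
def outer {n : Type*} [Fintype n] (ψ : n → ℂ) : Matrix n n ℂ :=
  Matrix.vecMulVec ψ (star ψ)

/-- The fully entangled fraction
`F(ρ) = max_U ⟨ψ⁺| (U† ⊗ I) ρ (U ⊗ I) |ψ⁺⟩`. -/
def fef (d : ℕ) (ρ : Matrix (Fin d × Fin d) (Fin d × Fin d) ℂ) : ℝ :=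
  sSup { x : ℝ | ∃ U ∈ Matrix.unitaryGroup (Fin d) ℂ,
    x = (star (tensorI U *ᵥ psiPlus d) ⬝ᵥ (ρ *ᵥ (tensorI U *ᵥ psiPlus d))).re }

/-- The swap operator `V = ∑_{ij} |ij⟩⟨ji|`. -/
def swapOp (d : ℕ) : Matrix (Fin d × Fin d) (Fin d × Fin d) ℂ :=
  fun p q => if p.1 = q.2 ∧ p.2 = q.1 then 1 else 0

/-- The Werner state on `ℂ^d ⊗ ℂ^d`. -/
def werner (d : ℕ) (f : ℝ) : Matrix (Fin d × Fin d) (Fin d × Fin d) ℂ :=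
  (((d : ℝ) - f) / ((d : ℝ) ^ 3 - d)) •
      (1 : Matrix (Fin d × Fin d) (Fin d × Fin d) ℂ) +
    (((d : ℝ) * f - 1) / ((d : ℝ) ^ 3 - d)) • swapOp d

/-!
Write `Ū` for the entrywise conjugate of a unitary `U`. Then `UŪ - 1 = U (Ū - Uᴴ)` and `Ū - Uᴴ`
is skew-symmetric, so for odd `d` its determinant vanishes and the unitary `M = UŪ` fixes a vector
`v ≠ 0`. Since `(1 + M) v = 2 v`, Cauchy–Schwarz gives `4 ≤ ‖1 + M‖²_F = 2d + 2 Re tr M`. The bound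
is attained by a signed permutation matrix pairing the basis vectors `e_{2m+1}, e_{2m+2}` so that
`UŪ = diag(1, -1, …, -1)`.

On the vector `(U ⊗ 1) ψ⁺ = vec Uᵀ / √d` the swap operator becomes transposition, so the
expectation of the Werner state is affine in `Re tr(UŪ)` with slope `(df - 1)/(d⁴ - d²) ≤ 0`, and
the fully entangled fraction is attained where that trace is smallest.
-/

namespace Matrix

variable {n : Type*} [Fintype n]

theorem sum_normSq_mulVec_le {m : Type*} [Fintype m] (A : Matrix m n ℂ) (v : n → ℂ) :
    ∑ i, normSq ((A *ᵥ v) i) ≤ (∑ i, ∑ j, normSq (A i j)) * ∑ j, normSq (v j) := by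
  rw [Finset.sum_mul]
  refine Finset.sum_le_sum fun i _ => ?_
  calc normSq ((A *ᵥ v) i) = ‖∑ j, A i j * v j‖ ^ 2 := (Complex.sq_norm _).symm
    _ ≤ (∑ j, ‖A i j‖ * ‖v j‖) ^ 2 := by
        gcongr
        exact (norm_sum_le _ _).trans_eq (by simp only [norm_mul])
    _ ≤ (∑ j, ‖A i j‖ ^ 2) * ∑ j, ‖v j‖ ^ 2 := sum_mul_sq_le_sq_mul_sq _ _ _
    _ = (∑ j, normSq (A i j)) * ∑ j, normSq (v j) := by simp only [Complex.sq_norm]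

theorem re_trace_mul_conjTranspose {m : Type*} [Fintype m] (A : Matrix m n ℂ) :
    (A * Aᴴ).trace.re = ∑ i, ∑ j, normSq (A i j) := by
  simp [trace, mul_apply, Complex.mul_conj]

theorem star_vec_transpose_dotProduct_vec_transpose {R : Type*} [CommSemiring R] [StarRing R]
    (U : Matrix n n R) : star (vec Uᵀ) ⬝ᵥ vec Uᵀ = (U * Uᴴ).trace := by
  rw [star_vec_dotProduct_vec, ← trace_transpose, transpose_mul, conjTranspose_transpose,
    transpose_transpose]
  rfl

theorem star_vec_transpose_dotProduct_vec {R : Type*} [CommSemiring R] [StarRing R]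
    (U : Matrix n n R) : star (vec Uᵀ) ⬝ᵥ vec U = (U * U.map (starRingEnd R)).trace := by
  rw [star_vec_dotProduct_vec, trace_mul_comm]
  rfl

variable [DecidableEq n]

theorem det_eq_zero_of_transpose_eq_neg {R : Type*} [CommRing R] [NoZeroDivisors R]
    [CharZero R] (hn : Odd (Fintype.card n)) {B : Matrix n n R} (hB : Bᵀ = -B) : B.det = 0 :=
  CharZero.eq_neg_self_iff.mp <| calc
    B.det = Bᵀ.det := (det_transpose B).symm
    _ = -B.det := by rw [hB, det_neg, hn.neg_one_pow, neg_one_mul]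

theorem exists_mulVec_mul_map_conj_eq_self (hn : Odd (Fintype.card n))
    {U : Matrix n n ℂ} (hU : U ∈ unitaryGroup n ℂ) :
    ∃ v ≠ 0, (U * U.map (starRingEnd ℂ)) *ᵥ v = v := by
  have hfac : U * U.map (starRingEnd ℂ) - 1 = U * (U.map (starRingEnd ℂ) - Uᴴ) := by
    rw [mul_sub, ← star_eq_conjTranspose, mem_unitaryGroup_iff.mp hU]
  have hskew : (U.map (starRingEnd ℂ) - Uᴴ)ᵀ = -(U.map (starRingEnd ℂ) - Uᴴ) := by
    ext i j
    simp
  have hdet : (U * U.map (starRingEnd ℂ) - 1).det = 0 := by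
    rw [hfac, det_mul, det_eq_zero_of_transpose_eq_neg hn hskew, mul_zero]
  obtain ⟨v, hv, h⟩ := exists_mulVec_eq_zero_iff.mpr hdet
  exact ⟨v, hv, by rwa [sub_mulVec, one_mulVec, sub_eq_zero] at h⟩

theorem re_trace_ge_of_mulVec_eq_self {M : Matrix n n ℂ} (hM : M ∈ unitaryGroup n ℂ)
    {v : n → ℂ} (hv : v ≠ 0) (hMv : M *ᵥ v = v) :
    -(Fintype.card n : ℝ) + 2 ≤ M.trace.re := by
  have hAv : (1 + M) *ᵥ v = (2 : ℂ) • v := by rw [add_mulVec, one_mulVec, hMv, two_smul]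
  have hfrob : ((1 + M) * (1 + M)ᴴ).trace.re = 2 * Fintype.card n + 2 * M.trace.re := by
    have hMM : M * Mᴴ = 1 := mem_unitaryGroup_iff.mp hM
    simp only [conjTranspose_add, conjTranspose_one, mul_add, mul_one, add_mul, one_mul, hMM,
      trace_add, trace_one, trace_conjTranspose, RCLike.star_def, add_re, natCast_re, conj_re]
    ring
  have hpos : 0 < ∑ j, normSq (v j) := by
    obtain ⟨j, hj⟩ := Function.ne_iff.mp hv
    exact Finset.sum_pos' (fun i _ => normSq_nonneg _) ⟨j, Finset.mem_univ j, normSq_pos.mpr hj⟩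
  have h2v : ∑ i, normSq (((2 : ℂ) • v) i) = 4 * ∑ j, normSq (v j) := by
    simp only [Pi.smul_apply, smul_eq_mul, normSq_mul, normSq_ofNat, Finset.mul_sum]
    norm_num
  have hCS := sum_normSq_mulVec_le (1 + M) v
  rw [hAv, h2v, ← re_trace_mul_conjTranspose, hfrob] at hCS
  linarith [le_of_mul_le_mul_right hCS hpos]

theorem neg_card_add_two_le_re_trace_mul_map_conj (hn : Odd (Fintype.card n))
    {U : Matrix n n ℂ} (hU : U ∈ unitaryGroup n ℂ) :
    -(Fintype.card n : ℝ) + 2 ≤ (U * U.map (starRingEnd ℂ)).trace.re := by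
  obtain ⟨v, hv, hMv⟩ := exists_mulVec_mul_map_conj_eq_self hn hU
  have hconj : U.map (starRingEnd ℂ) ∈ unitaryGroup n ℂ := map_star_mem_unitaryGroup_iff.mpr hU
  exact re_trace_ge_of_mulVec_eq_self (mul_mem hU hconj) hv hMv

def signedPermMatrix (σ : n → n) (s : n → ℕ) : Matrix n n ℂ :=
  of fun i j => if i = σ j then (-1) ^ s j else 0

theorem signedPermMatrix_mem_unitaryGroup {σ : n → n} (hσ : σ.Injective) (s : n → ℕ) :
    signedPermMatrix σ s ∈ unitaryGroup n ℂ := by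
  rw [mem_unitaryGroup_iff']
  ext i j
  by_cases hij : i = j
  · subst hij
    simp [signedPermMatrix, mul_apply, ← pow_add, ← two_mul, pow_mul]
  · simp [signedPermMatrix, mul_apply, (hσ.ne hij).symm, hij]

theorem trace_signedPermMatrix_mul_map_conj {σ : n → n} (hσ : σ.Involutive) (s : n → ℕ) :
    (signedPermMatrix σ s * (signedPermMatrix σ s).map (starRingEnd ℂ)).trace =
      ∑ i, (-1) ^ (s (σ i) + s i) := by
  refine Finset.sum_congr rfl fun i _ => ?_
  have hσ' : ∀ k, i = σ k ↔ k = σ i :=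
    fun k => ⟨fun h => h ▸ (hσ k).symm, fun h => h ▸ (hσ i).symm⟩
  simp [signedPermMatrix, mul_apply, hσ', pow_add]

end Matrix

/-- Exchanges `2m + 1` and `2m + 2`, and fixes `0` because `0 - 1 = 0` in `ℕ`. -/
def pairSwap (k : ℕ) : ℕ := if k % 2 = 1 then k + 1 else k - 1

theorem pairSwap_lt {d k : ℕ} (hd : Odd d) (hk : k < d) : pairSwap k < d := by
  rw [Nat.odd_iff] at hd
  unfold pairSwap
  split_ifs <;> omega

def finPairSwap {d : ℕ} (hd : Odd d) (i : Fin d) : Fin d := ⟨pairSwap i, pairSwap_lt hd i.2⟩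

theorem finPairSwap_involutive {d : ℕ} (hd : Odd d) : (finPairSwap hd).Involutive := by
  intro i
  ext
  simp only [finPairSwap, pairSwap]
  split_ifs <;> omega

theorem sum_neg_one_pow_pairSwap_add {d : ℕ} (hd : Odd d) :
    ∑ i : Fin d, (-1 : ℂ) ^ (pairSwap i + i) = 2 - d := by
  obtain ⟨k, rfl⟩ := hd
  have hodd : ∀ i : Fin (2 * k), Odd (pairSwap (i + 1) + (i + 1)) := by
    intro i
    rw [Nat.odd_iff]
    unfold pairSwap
    split_ifs <;> omega
  have h0 : pairSwap ((0 : Fin (2 * k + 1)) : ℕ) + (0 : Fin (2 * k + 1)) = 0 := rfl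
  rw [Fin.sum_univ_succ, h0, Finset.sum_congr rfl fun i _ => by simpa using (hodd i).neg_one_pow,
    Finset.sum_const, Finset.card_univ, Fintype.card_fin]
  push_cast
  ring

theorem exists_mem_unitaryGroup_re_trace_mul_map_conj_eq {d : ℕ} (hd : Odd d) :
    ∃ U ∈ unitaryGroup (Fin d) ℂ, (U * U.map (starRingEnd ℂ)).trace.re = -(d : ℝ) + 2 := by
  refine ⟨signedPermMatrix (finPairSwap hd) (↑),
    signedPermMatrix_mem_unitaryGroup (finPairSwap_involutive hd).injective _, ?_⟩
  rw [trace_signedPermMatrix_mul_map_conj (finPairSwap_involutive hd)]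
  simp only [finPairSwap]
  rw [sum_neg_one_pow_pairSwap_add hd]
  simp only [sub_re, re_ofNat, natCast_re]
  ring

section Werner

variable {d : ℕ}

theorem tensorI_mulVec_psiPlus (U : Matrix (Fin d) (Fin d) ℂ) :
    tensorI U *ᵥ psiPlus d = ((1 / √d : ℝ) : ℂ) • vec Uᵀ := by
  ext ⟨i, j⟩
  simp [mulVec, dotProduct, tensorI, psiPlus, Fintype.sum_prod_type, mul_comm]

theorem swapOp_mulVec (w : Fin d × Fin d → ℂ) : swapOp d *ᵥ w = w ∘ Prod.swap := by
  ext ⟨i, j⟩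
  simp [mulVec, dotProduct, swapOp, Fintype.sum_prod_type, ite_and]

theorem re_star_dotProduct_werner_mulVec (hd : 0 < d) (f : ℝ) {U : Matrix (Fin d) (Fin d) ℂ}
    (hU : U ∈ unitaryGroup (Fin d) ℂ) :
    (star (tensorI U *ᵥ psiPlus d) ⬝ᵥ (werner d f *ᵥ (tensorI U *ᵥ psiPlus d))).re =
      ((d : ℝ) - f) / ((d : ℝ) ^ 3 - d) +
        ((d : ℝ) * f - 1) / ((d : ℝ) ^ 4 - d ^ 2) * (U * U.map (starRingEnd ℂ)).trace.re := by
  have hc : star ((1 / √d : ℝ) : ℂ) * ((1 / √d : ℝ) : ℂ) = ((d⁻¹ : ℝ) : ℂ) := by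
    rw [Complex.star_def, Complex.conj_ofReal, ← Complex.ofReal_mul, div_mul_div_comm, one_mul,
      Real.mul_self_sqrt d.cast_nonneg, one_div]
  have hscale : ∀ z : ℂ,
      ((1 / √d : ℝ) : ℂ) * (star ((1 / √d : ℝ) : ℂ) * z) = ((d⁻¹ : ℝ) : ℂ) * z := by
    intro z
    rw [← mul_assoc, mul_comm ((1 / √d : ℝ) : ℂ), hc]
  have hswap : swapOp d *ᵥ (((1 / √d : ℝ) : ℂ) • vec Uᵀ) = ((1 / √d : ℝ) : ℂ) • vec U := by
    rw [swapOp_mulVec]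
    rfl
  have hUU : U * Uᴴ = 1 := mem_unitaryGroup_iff.mp hU
  rw [tensorI_mulVec_psiPlus, werner, add_mulVec, smul_mulVec, smul_mulVec, one_mulVec, hswap]
  simp only [dotProduct_add, dotProduct_smul, star_smul, smul_dotProduct,
    star_vec_transpose_dotProduct_vec_transpose, star_vec_transpose_dotProduct_vec, hUU, trace_one,
    smul_eq_mul, Complex.real_smul, hscale, Fintype.card_fin]
  simp only [Complex.add_re, Complex.re_ofReal_mul, Complex.natCast_re]
  field_simp [hd.ne']

theorem fef_werner_eq_of_isLeast (hd : 0 < d) {f : ℝ} (hf : f < 1 / (d : ℝ)) {m : ℝ}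
    (hm : IsLeast {t | ∃ U ∈ unitaryGroup (Fin d) ℂ, t = (U * U.map (starRingEnd ℂ)).trace.re} m) :
    fef d (werner d f) =
      ((d : ℝ) - f) / ((d : ℝ) ^ 3 - d) + ((d : ℝ) * f - 1) / ((d : ℝ) ^ 4 - d ^ 2) * m := by
  have hslope : ((d : ℝ) * f - 1) / ((d : ℝ) ^ 4 - d ^ 2) ≤ 0 := by
    have hd1 : (1 : ℝ) ≤ d := by exact_mod_cast hd
    have hden : (d : ℝ) ^ 4 - d ^ 2 = d ^ 2 * (d ^ 2 - 1) := by ring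
    refine div_nonpos_of_nonpos_of_nonneg ?_ (hden ▸ mul_nonneg (sq_nonneg _) (by nlinarith))
    rw [lt_div_iff₀ (by positivity)] at hf
    linarith
  obtain ⟨⟨U₀, hU₀, rfl⟩, hlow⟩ := hm
  rw [fef]
  refine IsGreatest.csSup_eq ⟨⟨U₀, hU₀, (re_star_dotProduct_werner_mulVec hd f hU₀).symm⟩, ?_⟩
  rintro x ⟨U, hU, rfl⟩
  rw [re_star_dotProduct_werner_mulVec hd f hU]
  exact add_le_add_right (mul_le_mul_of_nonpos_left (hlow ⟨U, hU, rfl⟩) hslope) _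

end Werner

theorem fef_werner_odd_general (d : ℕ) (hodd : Odd d) :
    (∀ U ∈ Matrix.unitaryGroup (Fin d) ℂ,
      -(d : ℝ) + 2 ≤ (Matrix.trace (U * U.map (starRingEnd ℂ))).re) ∧
    (∀ f : ℝ, -1 ≤ f → f < 1 / (d : ℝ) →
      fef d (werner d f) =
        ((d : ℝ) ^ 2 - (d : ℝ) ^ 2 * f + (d : ℝ) * f + (d : ℝ) - 2) /
          ((d : ℝ) ^ 2 * ((d : ℝ) ^ 2 - 1))) := by
  have htrace : ∀ U ∈ unitaryGroup (Fin d) ℂ,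
      -(d : ℝ) + 2 ≤ (U * U.map (starRingEnd ℂ)).trace.re := fun U hU => by
    simpa using neg_card_add_two_le_re_trace_mul_map_conj (by simpa using hodd) hU
  refine ⟨htrace, fun f _ hf => ?_⟩
  obtain ⟨U₀, hU₀, htr₀⟩ := exists_mem_unitaryGroup_re_trace_mul_map_conj_eq hodd
  have hmin : IsLeast {t | ∃ U ∈ unitaryGroup (Fin d) ℂ,
      t = (U * U.map (starRingEnd ℂ)).trace.re} (-(d : ℝ) + 2) :=
    ⟨⟨U₀, hU₀, htr₀.symm⟩, fun _ ⟨U, hU, ht⟩ => ht ▸ htrace U hU⟩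
  rw [fef_werner_eq_of_isLeast hodd.pos hf hmin]
  obtain rfl | hd1 := (Nat.succ_le_of_lt hodd.pos).eq_or_lt
  · -- for `d = 1` both sides are `0` by division by zero
    norm_num
  · have : (1 : ℝ) < d := by exact_mod_cast hd1
    have h2 : (d : ℝ) ^ 2 - 1 ≠ 0 := by nlinarith
    rw [show (d : ℝ) ^ 3 - d = d * (d ^ 2 - 1) by ring,
      show (d : ℝ) ^ 4 - d ^ 2 = d ^ 2 * (d ^ 2 - 1) by ring]
    field_simp
    ring

/-- For `d` odd, `tr(UU*) ≥ −d + 2` for any unitary `U`; consequently the FEF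
of the Werner state for `−1 ≤ f < 1/d` equals
`(d² − d²f + df + d − 2)/(d²(d²−1))`. -/
theorem fef_werner_odd (d : ℕ) (hd : 0 < d) (hodd : Odd d) :
    (∀ U ∈ Matrix.unitaryGroup (Fin d) ℂ,
      -(d : ℝ) + 2 ≤ (Matrix.trace (U * U.map (starRingEnd ℂ))).re) ∧
    (∀ f : ℝ, -1 ≤ f → f < 1 / (d : ℝ) →
      fef d (werner d f) =
        ((d : ℝ) ^ 2 - (d : ℝ) ^ 2 * f + (d : ℝ) * f + (d : ℝ) - 2) /
          ((d : ℝ) ^ 2 * ((d : ℝ) ^ 2 - 1))) :=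
  fef_werner_odd_general d hodd
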